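/- Given a privacy budget ε > 0, an integer N ≥ 3, and real quality losses 0 ≤ λ₁ ≤ λ₂ ≤ ⋯ ≤ λ_N, define for 1 ≤ m ≤ N the bipartite expected error Q(m) = (e^ε·Σ_{i=1}^m λ_i + Σ_{i=m+1}^N λ_i)/(m·e^ε + N − m). Then the sequence Q(1), Q(2), …, Q(N) is unimodal in the following sense: for every m with 1 ≤ m ≤ N − 2, if Q(m+1) ≥ Q(m) then Q(m+2) ≥ Q(m+1). Consequently, the local search that increases m while the error strictly decreases and stops at the first non-decrease returns a global minimizer of Q over {1,…,N}. -/

import Mathlib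

open Real Finset

/-!
Moving item `m + 1` from weight `1` to weight `e^ε` makes `Q (m + 1)` a weighted average of
`Q m` and `λ_{m+1}` with positive weights, so `Q m ≤ Q (m + 1)` holds exactly when
`Q (m + 1) ≤ λ_{m+1}`, and also exactly when `Q m ≤ λ_{m+1}`. Once `Q` stops decreasing,
`Q (m + 1) ≤ λ_{m+1} ≤ λ_{m+2}`, so it does not decrease at the next step either. Hence `Q`
strictly decreases up to the point where the local search stops and is nondecreasing afterwards.
-/

section WeightedAverage

variable {A B L d c : ℝ}

theorem le_weighted_average_iff_weighted_average_le (hd : 0 < d) (hc : 0 < c)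
    (h : (d + c) * B = d * A + c * L) : A ≤ B ↔ B ≤ L := by
  have hdiff : d * (B - A) = c * (L - B) := by linarith
  rw [← sub_nonneg, ← mul_nonneg_iff_of_pos_left hd, hdiff, mul_nonneg_iff_of_pos_left hc,
    sub_nonneg]

theorem le_weighted_average_iff_le (hd : 0 < d) (hc : 0 < c)
    (h : (d + c) * B = d * A + c * L) : A ≤ B ↔ A ≤ L := by
  have hdiff : (d + c) * (B - A) = c * (L - A) := by linarith
  rw [← sub_nonneg, ← mul_nonneg_iff_of_pos_left (add_pos hd hc), hdiff,
    mul_nonneg_iff_of_pos_left hc, sub_nonneg]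

end WeightedAverage

section LocalSearch

variable {α : Type*} [Preorder α] {f : ℕ → α} {a b n : ℕ}

theorem monotoneOn_Icc_of_unimodal
    (huni : ∀ m, a ≤ m → m + 2 ≤ b → f m ≤ f (m + 1) → f (m + 1) ≤ f (m + 2))
    (han : a ≤ n) (hstep : n < b → f n ≤ f (n + 1)) : MonotoneOn f (Set.Icc n b) := by
  have hsucc : ∀ k, n ≤ k → k < b → f k ≤ f (k + 1) := by
    intro k hnk
    induction k, hnk using Nat.le_induction with
    | base => exact hstep
    | succ k hnk ih => exact fun hk => huni k (han.trans hnk) hk (ih (by omega))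
  refine monotoneOn_of_le_add_one Set.ordConnected_Icc fun k _ hk hk1 => ?_
  exact hsucc k hk.1 (Nat.lt_of_succ_le hk1.2)

theorem le_of_unimodal_of_local_search
    (huni : ∀ m, a ≤ m → m + 2 ≤ b → f m ≤ f (m + 1) → f (m + 1) ≤ f (m + 2))
    (hdesc : ∀ i, a ≤ i → i < n → f (i + 1) < f i) (hstop : n = b ∨ f n ≤ f (n + 1))
    (han : a ≤ n) (hnb : n ≤ b) {m : ℕ} (ham : a ≤ m) (hmb : m ≤ b) : f n ≤ f m := by
  rcases le_total m n with hmn | hnm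
  · have hanti : AntitoneOn f (Set.Icc a n) :=
      antitoneOn_of_add_one_le Set.ordConnected_Icc fun i _ hi hi1 =>
        (hdesc i hi.1 (Nat.lt_of_succ_le hi1.2)).le
    exact hanti ⟨ham, hmn⟩ ⟨han, le_rfl⟩ hmn
  · have hstep : n < b → f n ≤ f (n + 1) := fun hn => hstop.resolve_left hn.ne
    exact monotoneOn_Icc_of_unimodal huni han hstep ⟨le_rfl, hnb⟩ ⟨hnm, hmb⟩ hnm

end LocalSearch

theorem sum_Icc_eq_add_sum_Icc_add_one {M : Type*} [AddCommMonoid M] (f : ℕ → M) {a b : ℕ}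
    (hab : a ≤ b) : ∑ i ∈ Icc a b, f i = f a + ∑ i ∈ Icc (a + 1) b, f i := by
  rw [← insert_Icc_add_one_left_eq_Icc hab, sum_insert (by simp)]

section BipartiteError

variable {ε : ℝ} {N : ℕ} {lam : ℕ → ℝ} {m : ℕ}

noncomputable def bipartiteWeight (ε : ℝ) (N m : ℕ) : ℝ :=
  m * exp ε + N - m

noncomputable def bipartiteError (ε : ℝ) (N : ℕ) (lam : ℕ → ℝ) (m : ℕ) : ℝ :=
  (exp ε * ∑ i ∈ Icc 1 m, lam i + ∑ i ∈ Icc (m + 1) N, lam i) / bipartiteWeight ε N m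

theorem bipartiteWeight_pos (hN : 0 < N) (hmN : m ≤ N) : 0 < bipartiteWeight ε N m := by
  rcases Nat.eq_zero_or_pos m with rfl | hm
  · simpa [bipartiteWeight] using hN
  · have : (0 : ℝ) < m := by exact_mod_cast hm
    have : (m : ℝ) ≤ N := by exact_mod_cast hmN
    rw [bipartiteWeight]
    nlinarith [exp_pos ε]

theorem bipartiteWeight_succ :
    bipartiteWeight ε N (m + 1) = bipartiteWeight ε N m + (exp ε - 1) := by
  simp only [bipartiteWeight]
  push_cast
  ring

/-- The numerator grows by `(e^ε - 1) λ_{m+1}`. -/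
theorem bipartiteError_succ_weighted_average (hmN : m < N) :
    (bipartiteWeight ε N m + (exp ε - 1)) * bipartiteError ε N lam (m + 1) =
      bipartiteWeight ε N m * bipartiteError ε N lam m + (exp ε - 1) * lam (m + 1) := by
  rw [bipartiteError, bipartiteError, ← bipartiteWeight_succ,
    mul_div_cancel₀ _ (bipartiteWeight_pos (by omega) hmN).ne',
    mul_div_cancel₀ _ (bipartiteWeight_pos (by omega) hmN.le).ne', sum_Icc_succ_top (by omega),
    sum_Icc_eq_add_sum_Icc_add_one lam hmN]
  ring

theorem bipartiteError_le_succ_iff_succ_le (hε : 0 < ε) (hmN : m < N) :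
    bipartiteError ε N lam m ≤ bipartiteError ε N lam (m + 1) ↔
      bipartiteError ε N lam (m + 1) ≤ lam (m + 1) :=
  le_weighted_average_iff_weighted_average_le (bipartiteWeight_pos (by omega) hmN.le)
    (sub_pos.2 (one_lt_exp_iff.2 hε)) (bipartiteError_succ_weighted_average hmN)

theorem bipartiteError_le_succ_iff_le (hε : 0 < ε) (hmN : m < N) :
    bipartiteError ε N lam m ≤ bipartiteError ε N lam (m + 1) ↔
      bipartiteError ε N lam m ≤ lam (m + 1) :=
  le_weighted_average_iff_le (bipartiteWeight_pos (by omega) hmN.le)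
    (sub_pos.2 (one_lt_exp_iff.2 hε)) (bipartiteError_succ_weighted_average hmN)

theorem bipartiteError_succ_le_succ_succ (hε : 0 < ε) (hlam : lam (m + 1) ≤ lam (m + 2))
    (hmN : m + 2 ≤ N) (hle : bipartiteError ε N lam m ≤ bipartiteError ε N lam (m + 1)) :
    bipartiteError ε N lam (m + 1) ≤ bipartiteError ε N lam (m + 2) := by
  have hbelow := (bipartiteError_le_succ_iff_succ_le hε (by omega)).1 hle
  exact (bipartiteError_le_succ_iff_le hε hmN).2 (hbelow.trans hlam)

end BipartiteError

theorem brr_unimodal_local_search_optimal_general (ε : ℝ) (hε : 0 < ε) (N : ℕ)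
    (lam : ℕ → ℝ)
    (hmono : ∀ i, 1 ≤ i → i < N → lam i ≤ lam (i + 1))
    (Q : ℕ → ℝ)
    (hQ : ∀ m, Q m =
      (Real.exp ε * ∑ i ∈ Finset.Icc 1 m, lam i + ∑ i ∈ Finset.Icc (m + 1) N, lam i)
        / (m * Real.exp ε + N - m)) :
    (∀ m, 1 ≤ m → m ≤ N - 2 → Q m ≤ Q (m + 1) → Q (m + 1) ≤ Q (m + 2)) ∧
    (∀ mstar, 1 ≤ mstar → mstar ≤ N →
      (∀ i, 1 ≤ i → i < mstar → Q (i + 1) < Q i) →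
      (mstar = N ∨ Q mstar ≤ Q (mstar + 1)) →
      ∀ m, 1 ≤ m → m ≤ N → Q mstar ≤ Q m) := by
  obtain rfl : Q = bipartiteError ε N lam := funext hQ
  set Q := bipartiteError ε N lam
  have huni : ∀ m, 1 ≤ m → m + 2 ≤ N → Q m ≤ Q (m + 1) → Q (m + 1) ≤ Q (m + 2) :=
    fun m _ hmN => bipartiteError_succ_le_succ_succ hε (hmono (m + 1) (by omega) (by omega)) hmN
  refine ⟨fun m hm1 hmN => huni m hm1 (by omega), ?_⟩
  intro mstar h1 hN hdesc hstop m hm1 hmN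
  exact le_of_unimodal_of_local_search huni hdesc hstop h1 hN hm1 hmN

/-- For the bipartite expected error
`Q(m) = (e^ε·Σ_{i≤m} λ_i + Σ_{i>m} λ_i)/(m·e^ε + N − m)` with sorted nonnegative losses,
the sequence `Q(1), …, Q(N)` is unimodal: if `Q(m+1) ≥ Q(m)` then `Q(m+2) ≥ Q(m+1)`.
Consequently, the local search that increases `m` while the error strictly decreases and
stops at the first non-decrease returns a global minimizer of `Q` over `{1,…,N}`. -/
theorem brr_unimodal_local_search_optimal (ε : ℝ) (hε : 0 < ε) (N : ℕ) (hN : 3 ≤ N)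
    (lam : ℕ → ℝ) (h0 : 0 ≤ lam 1)
    (hmono : ∀ i, 1 ≤ i → i < N → lam i ≤ lam (i + 1))
    (Q : ℕ → ℝ)
    (hQ : ∀ m, Q m =
      (Real.exp ε * ∑ i ∈ Finset.Icc 1 m, lam i + ∑ i ∈ Finset.Icc (m + 1) N, lam i)
        / (m * Real.exp ε + N - m)) :
    (∀ m, 1 ≤ m → m ≤ N - 2 → Q m ≤ Q (m + 1) → Q (m + 1) ≤ Q (m + 2)) ∧
    (∀ mstar, 1 ≤ mstar → mstar ≤ N →
      (∀ i, 1 ≤ i → i < mstar → Q (i + 1) < Q i) →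
      (mstar = N ∨ Q mstar ≤ Q (mstar + 1)) →
      ∀ m, 1 ≤ m → m ≤ N → Q mstar ≤ Q m) :=
  brr_unimodal_local_search_optimal_general ε hε N lam hmono Q hQ
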